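/- Let C and D be categories, F : C → D and G : D → C functors, V a class of morphisms of C and W a class of morphisms of D. Suppose that F sends every morphism of V into W, G sends every morphism of W into V, the composite G∘F is related to the identity functor of C by a finite chain of natural transformations all of whose components lie in V, and F∘G is related to the identity functor of D by a finite chain of natural transformations all of whose components lie in W. Then the localization of C with respect to V exists if and only if the localization of D with respect to W exists, and in that case F and G induce an equivalence of categories C[V⁻¹] ≃ D[W⁻¹]. -/

import Mathlib

/-!
After localizing, each natural transformation of a chain becomes an isomorphism, so the chains
give `F ⋙ G ⋙ V.Q ≅ V.Q` and `G ⋙ F ⋙ W.Q ≅ W.Q`. Hence the functors induced by `F` and `G`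
on the localized categories are inverse to each other up to isomorphism, by uniqueness of lifts
along a localization functor. Existence of a localization with morphisms in `Type w` amounts to
the localized category being locally `w`-small, which is invariant under equivalence.
-/

open CategoryTheory

universe w v₁ v₂ u₁ u₂

/-- Two functors `F G : A ⥤ C` are related by a finite chain of natural transformations
(in either direction) all of whose components lie in the class `V`. -/
inductive ChainInV {A : Type*} [Category A] {C : Type*} [Category C]
    (V : MorphismProperty C) : (A ⥤ C) → (A ⥤ C) → Prop
  | refl (F : A ⥤ C) : ChainInV V F F
  | forward {F G H : A ⥤ C} (η : F ⟶ G) (hη : ∀ a, V (η.app a)) :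
      ChainInV V G H → ChainInV V F H
  | backward {F G H : A ⥤ C} (η : G ⟶ F) (hη : ∀ a, V (η.app a)) :
      ChainInV V G H → ChainInV V F H

namespace CategoryTheory

lemma MorphismProperty.IsInvertedBy.isIso_whiskerRight {A C E : Type*} [Category A]
    [Category C] [Category E] {V : MorphismProperty C} {L : C ⥤ E} (hL : V.IsInvertedBy L)
    {H K : A ⥤ C} (η : H ⟶ K) (hη : ∀ a, V (η.app a)) :
    IsIso (Functor.whiskerRight η L) :=
  have (a : A) : IsIso ((Functor.whiskerRight η L).app a) := hL _ (hη a)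
  NatIso.isIso_of_isIso_app _

lemma MorphismProperty.nonempty_hasLocalization_iff_locallySmall {C : Type u₁} [Category.{v₁} C]
    (W : MorphismProperty C) {D : Type u₂} [Category.{v₂} D] (L : C ⥤ D) [L.IsLocalization W] :
    Nonempty (W.HasLocalization.{w}) ↔ LocallySmall.{w} D :=
  ⟨fun ⟨_⟩ => W.locallySmall_of_hasLocalization L,
    fun _ => ⟨W.hasLocalizationOfLocallySmall' L⟩⟩

end CategoryTheory

lemma ChainInV.nonempty_iso_comp {A C E : Type*} [Category A] [Category C] [Category E]
    {V : MorphismProperty C} {H K : A ⥤ C} (h : ChainInV V H K) {L : C ⥤ E}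
    (hL : V.IsInvertedBy L) :
    Nonempty (H ⋙ L ≅ K ⋙ L) := by
  induction h with
  | refl => exact ⟨Iso.refl _⟩
  | forward η hη _ ih =>
    have := hL.isIso_whiskerRight η hη
    exact ⟨asIso (Functor.whiskerRight η L) ≪≫ ih.some⟩
  | backward η hη _ ih =>
    have := hL.isIso_whiskerRight η hη
    exact ⟨(asIso (Functor.whiskerRight η L)).symm ≪≫ ih.some⟩

namespace CategoryTheory.MorphismProperty

variable {C : Type u₁} [Category.{v₁} C] {D : Type u₂} [Category.{v₂} D]
  {F : C ⥤ D} {G : D ⥤ C} {V : MorphismProperty C} {W : MorphismProperty D}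

lemma isInvertedBy_comp_Q (hF : ∀ ⦃X Y : C⦄ (f : X ⟶ Y), V f → W (F.map f)) :
    V.IsInvertedBy (F ⋙ W.Q) :=
  fun _ _ f hf => Localization.inverts W.Q W _ (hF f hf)

lemma nonempty_comp_Q_comp_lift_iso (hG : ∀ ⦃X Y : D⦄ (f : X ⟶ Y), W f → V (G.map f))
    (hGF : ChainInV V (F ⋙ G) (𝟭 C)) :
    Nonempty ((F ⋙ W.Q) ⋙ Localization.lift (G ⋙ V.Q) (isInvertedBy_comp_Q hG) W.Q ≅ V.Q) :=
  ⟨calc (F ⋙ W.Q) ⋙ _ ≅ F ⋙ W.Q ⋙ _ := Functor.associator _ _ _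
    _ ≅ F ⋙ G ⋙ V.Q := Functor.isoWhiskerLeft F (Localization.fac _ _ _)
    _ ≅ (F ⋙ G) ⋙ V.Q := (Functor.associator _ _ _).symm
    _ ≅ 𝟭 C ⋙ V.Q := (hGF.nonempty_iso_comp (Localization.inverts V.Q V)).some
    _ ≅ V.Q := Functor.leftUnitor _⟩

noncomputable def localizationEquivalence
    (hF : ∀ ⦃X Y : C⦄ (f : X ⟶ Y), V f → W (F.map f))
    (hG : ∀ ⦃X Y : D⦄ (f : X ⟶ Y), W f → V (G.map f))
    (hGF : ChainInV V (F ⋙ G) (𝟭 C)) (hFG : ChainInV W (G ⋙ F) (𝟭 D)) :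
    V.Localization ≌ W.Localization :=
  Localization.equivalence V.Q V W.Q W (F ⋙ W.Q) _ (G ⋙ V.Q) _
    (nonempty_comp_Q_comp_lift_iso hG hGF).some (nonempty_comp_Q_comp_lift_iso hF hFG).some

end CategoryTheory.MorphismProperty

theorem localization_equivalence_of_chains
    {C : Type u₁} [Category.{v₁} C] {D : Type u₂} [Category.{v₂} D]
    (F : C ⥤ D) (G : D ⥤ C) (V : MorphismProperty C) (W : MorphismProperty D)
    (hF : ∀ ⦃X Y : C⦄ (f : X ⟶ Y), V f → W (F.map f))
    (hG : ∀ ⦃X Y : D⦄ (f : X ⟶ Y), W f → V (G.map f))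
    (hGF : ChainInV V (F ⋙ G) (𝟭 C))
    (hFG : ChainInV W (G ⋙ F) (𝟭 D)) :
    (Nonempty (MorphismProperty.HasLocalization.{w} V) ↔ Nonempty (MorphismProperty.HasLocalization.{w} W)) ∧
    ∃ (F' : V.Localization ⥤ W.Localization) (G' : W.Localization ⥤ V.Localization),
      Nonempty (V.Q ⋙ F' ≅ F ⋙ W.Q) ∧ Nonempty (W.Q ⋙ G' ≅ G ⋙ V.Q) ∧
      Nonempty (F' ⋙ G' ≅ 𝟭 V.Localization) ∧ Nonempty (G' ⋙ F' ≅ 𝟭 W.Localization) := by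
  let e := MorphismProperty.localizationEquivalence hF hG hGF hFG
  refine ⟨?_, e.functor, e.inverse, ⟨Localization.fac _ _ _⟩, ⟨Localization.fac _ _ _⟩,
    ⟨e.unitIso.symm⟩, ⟨e.counitIso⟩⟩
  rw [V.nonempty_hasLocalization_iff_locallySmall V.Q,
    W.nonempty_hasLocalization_iff_locallySmall W.Q]
  exact locallySmall_congr e
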